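/- Let q ≥ 1 and t ≥ 1, let G be a finite subgroup of U(q), and let λ be the character of a finite-dimensional irreducible complex representation of G. If G is a λ-twisted unitary t-group, then G is a unitary t-group. -/

import Mathlib

open MeasureTheory Matrix

variable (q : ℕ)

noncomputable instance : MeasurableSpace (Matrix.unitaryGroup (Fin q) ℂ) := borel _
instance : BorelSpace (Matrix.unitaryGroup (Fin q) ℂ) := ⟨rfl⟩

instance : IsTopologicalGroup (Matrix.unitaryGroup (Fin q) ℂ) where
  continuous_mul := by
    apply continuous_induced_rng.2
    have h1 : Continuous fun p : Matrix.unitaryGroup (Fin q) ℂ × Matrix.unitaryGroup (Fin q) ℂ =>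
        ((p.1 : Matrix (Fin q) (Fin q) ℂ), (p.2 : Matrix (Fin q) (Fin q) ℂ)) :=
      (continuous_subtype_val.comp continuous_fst).prodMk (continuous_subtype_val.comp continuous_snd)
    exact (continuous_fst.matrix_mul continuous_snd).comp h1
  continuous_inv := by
    apply continuous_induced_rng.2
    have : (fun a : Matrix.unitaryGroup (Fin q) ℂ => ((a⁻¹ : Matrix.unitaryGroup (Fin q) ℂ) : Matrix (Fin q) (Fin q) ℂ))
        = fun a : Matrix.unitaryGroup (Fin q) ℂ => star (a : Matrix (Fin q) (Fin q) ℂ) := by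
      funext a
      rw [← Unitary.star_eq_inv, Unitary.coe_star]
    show Continuous (fun a : Matrix.unitaryGroup (Fin q) ℂ => ((a⁻¹ : Matrix.unitaryGroup (Fin q) ℂ) : Matrix (Fin q) (Fin q) ℂ))
    rw [this]
    exact continuous_subtype_val.star

instance : CompactSpace (Matrix.unitaryGroup (Fin q) ℂ) := by
  apply isCompact_iff_compactSpace.mp
  have hsub : (Matrix.unitaryGroup (Fin q) ℂ : Set (Matrix (Fin q) (Fin q) ℂ)) ⊆
      Set.univ.pi fun _ : Fin q => Set.univ.pi fun _ : Fin q => Metric.closedBall (0 : ℂ) 1 := by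
    intro U hU
    intro i _ 
    intro j _
    simpa [Complex.dist_eq] using entry_norm_bound_of_unitary hU i j
  have hcomp : IsCompact (Set.univ.pi fun _ : Fin q => Set.univ.pi fun _ : Fin q =>
      Metric.closedBall (0 : ℂ) 1) :=
    isCompact_univ_pi fun _ => isCompact_univ_pi fun _ => isCompact_closedBall 0 1
  have hclosed : IsClosed (Matrix.unitaryGroup (Fin q) ℂ : Set (Matrix (Fin q) (Fin q) ℂ)) := by
    have : (Matrix.unitaryGroup (Fin q) ℂ : Set (Matrix (Fin q) (Fin q) ℂ)) =
        (fun U : Matrix (Fin q) (Fin q) ℂ => star U * U) ⁻¹' {1} ∩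
        (fun U : Matrix (Fin q) (Fin q) ℂ => U * star U) ⁻¹' {1} := by
      ext U
      simp [Matrix.mem_unitaryGroup_iff, Unitary.mem_iff, Set.mem_inter_iff]
      try tauto
    rw [this]
    exact ((isClosed_singleton.preimage (continuous_id.star.matrix_mul continuous_id)).inter
      (isClosed_singleton.preimage (continuous_id.matrix_mul continuous_id.star)))
  exact hcomp.of_isClosed_subset hclosed hsub

/-- The unit-normalized Haar measure on the unitary group `U(q)`:
the Haar measure normalized so that the total mass of `U(q)` is `1`. -/
noncomputable def haarU : Measure (Matrix.unitaryGroup (Fin q) ℂ) :=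
  Measure.haarMeasure (⊤ : TopologicalSpace.PositiveCompacts (Matrix.unitaryGroup (Fin q) ℂ))

/-- The `t`-fold Kronecker power `(A ⊗ Ā)^{⊗ t}`, realized as a matrix whose rows and
columns are indexed by `Fin t → Fin q × Fin q`: the entry at `(i, j)` is
`∏ k, A (i k).1 (j k).1 * conj (A (i k).2 (j k).2)`. -/
noncomputable def kronPow (t : ℕ) (A : Matrix (Fin q) (Fin q) ℂ) :
    Matrix (Fin t → Fin q × Fin q) (Fin t → Fin q × Fin q) ℂ :=
  Matrix.of fun i j => ∏ k : Fin t, (A (i k).1 (j k).1 * (starRingEnd ℂ) (A (i k).2 (j k).2))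

/-! Write `P = ∫ (U ⊗ Ū)^{⊗t} dU`, `S` for the plain average of `(g ⊗ ḡ)^{⊗t}` over `G` and `T`
for the twisted one. By left invariance of Haar measure, `P` is an idempotent absorbed by every
`(g ⊗ ḡ)^{⊗t}`, so `S P = P`. Reindexing the sum over `G` gives `S (h ⊗ h̄)^{⊗t} = S`, hence
`S T = c S` with `c` the mean of `|λ|²`. If `T = P`, then `P = S P = c S`, so
`P = P² = c S P = c P`; since `P ≠ 0` (its diagonal entries integrate functions `∏ |U_aa|² ≥ 0`
equal to `1` at the identity), `c = 1` and `S = P`. -/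

lemma kronPow_mul (t : ℕ) (A B : Matrix (Fin q) (Fin q) ℂ) :
    kronPow q t (A * B) = kronPow q t A * kronPow q t B := by
  ext i j
  have hfactor : ∀ k : Fin t,
      (A * B) (i k).1 (j k).1 * starRingEnd ℂ ((A * B) (i k).2 (j k).2) =
        ∑ p : Fin q × Fin q, (A (i k).1 p.1 * starRingEnd ℂ (A (i k).2 p.2)) *
          (B p.1 (j k).1 * starRingEnd ℂ (B p.2 (j k).2)) := fun k => by
    simp only [mul_apply, map_sum, map_mul, Finset.sum_mul_sum, ← Fintype.sum_prod_type']
    exact Finset.sum_congr rfl fun p _ => by ring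
  rw [mul_apply]
  simp only [kronPow, of_apply, hfactor]
  rw [Fintype.prod_sum]
  simp only [Finset.prod_mul_distrib]

lemma kronPow_one (t : ℕ) : kronPow q t 1 = 1 := by
  ext i j
  by_cases hij : i = j
  · subst hij
    simp [kronPow]
  · obtain ⟨k, hk⟩ := Function.ne_iff.mp hij
    rw [one_apply_ne hij]
    refine Finset.prod_eq_zero (Finset.mem_univ k) ?_
    rcases not_and_or.mp (mt Prod.ext_iff.mpr hk) with h | h <;> simp [one_apply_ne h]

noncomputable def kronPowHom (t : ℕ) :
    Matrix (Fin q) (Fin q) ℂ →* Matrix (Fin t → Fin q × Fin q) (Fin t → Fin q × Fin q) ℂ where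
  toFun := kronPow q t
  map_one' := kronPow_one q t
  map_mul' := kronPow_mul q t

lemma continuous_kronPow (t : ℕ) : Continuous (kronPow q t) := by
  unfold kronPow
  fun_prop

lemma kronPow_apply_diag (t : ℕ) (A : Matrix (Fin q) (Fin q) ℂ) (a : Fin t → Fin q) :
    kronPow q t A (fun k => (a k, a k)) (fun k => (a k, a k)) =
      ((∏ k, Complex.normSq (A (a k) (a k)) : ℝ) : ℂ) := by
  simp [kronPow, Complex.mul_conj]

section MatrixIntegral

variable {X ι : Type*} [MeasurableSpace X] {μ : Measure X}

-- Entrywise, as in the statement: `Matrix` carries no canonical norm for a Bochner integral.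
variable (μ) in
noncomputable def matrixIntegral (f : X → Matrix ι ι ℂ) : Matrix ι ι ℂ :=
  of fun i j => ∫ x, f x i j ∂μ

lemma mul_matrixIntegral [Fintype ι] (A : Matrix ι ι ℂ) {f : X → Matrix ι ι ℂ}
    (hf : ∀ i j, Integrable (fun x => f x i j) μ) :
    A * matrixIntegral μ f = matrixIntegral μ fun x => A * f x := by
  ext i j
  simp only [matrixIntegral, of_apply, mul_apply, ← integral_const_mul]
  exact (integral_finsetSum _ fun m _ => (hf m j).const_mul _).symm

lemma matrixIntegral_mul [Fintype ι] {f : X → Matrix ι ι ℂ}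
    (hf : ∀ i j, Integrable (fun x => f x i j) μ) (A : Matrix ι ι ℂ) :
    matrixIntegral μ f * A = matrixIntegral μ fun x => f x * A := by
  ext i j
  simp only [matrixIntegral, of_apply, mul_apply, ← integral_mul_const]
  exact (integral_finsetSum _ fun m _ => (hf i m).mul_const _).symm

lemma matrixIntegral_const [IsProbabilityMeasure μ] (A : Matrix ι ι ℂ) :
    matrixIntegral μ (fun _ => A) = A := by
  ext i j
  simp [matrixIntegral]

end MatrixIntegral

section HaarProjection

variable {K ι : Type*} [Group K] [MeasurableSpace K] [MeasurableMul K] [Fintype ι] [DecidableEq ι]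
  {μ : Measure K} [μ.IsMulLeftInvariant] {π : K →* Matrix ι ι ℂ}

lemma mul_matrixIntegral_left (hπ : ∀ i j, Integrable (fun x => π x i j) μ) (g : K) :
    π g * matrixIntegral μ π = matrixIntegral μ π := by
  rw [mul_matrixIntegral _ hπ]
  ext i j
  simp only [matrixIntegral, of_apply, ← map_mul]
  exact integral_mul_left_eq_self (fun x => π x i j) g

lemma isIdempotentElem_matrixIntegral [IsProbabilityMeasure μ]
    (hπ : ∀ i j, Integrable (fun x => π x i j) μ) :
    IsIdempotentElem (matrixIntegral μ π) := by
  rw [IsIdempotentElem, matrixIntegral_mul hπ]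
  simp only [mul_matrixIntegral_left hπ, matrixIntegral_const]

end HaarProjection

section GroupAverage

variable {k A G : Type*} [Field k] [Ring A] [Algebra k A] [Group G] [Fintype G] (π : G →* A)

lemma sum_mul_map_eq_sum (h : G) : (∑ g, π g) * π h = ∑ g, π g := by
  simp only [Finset.sum_mul, ← map_mul]
  exact Fintype.sum_equiv (Equiv.mulRight h) _ _ fun _ => rfl

lemma average_mul_weightedAverage (w : G → k) :
    ((Fintype.card G : k)⁻¹ • ∑ g, π g) * ((Fintype.card G : k)⁻¹ • ∑ h, w h • π h) =
      ((Fintype.card G : k)⁻¹ * ∑ h, w h) • ((Fintype.card G : k)⁻¹ • ∑ g, π g) := by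
  set S := (Fintype.card G : k)⁻¹ • ∑ g, π g
  calc S * ((Fintype.card G : k)⁻¹ • ∑ h, w h • π h)
      = (Fintype.card G : k)⁻¹ • ∑ h, w h • (S * π h) := by
        simp only [mul_smul_comm, Finset.mul_sum]
    _ = (Fintype.card G : k)⁻¹ • ∑ h, w h • S := by
        simp only [S, smul_mul_assoc, sum_mul_map_eq_sum]
    _ = ((Fintype.card G : k)⁻¹ * ∑ h, w h) • S := by
        rw [← Finset.sum_smul, smul_smul]

lemma average_mul_of_forall_mul_eq [CharZero k] {P : A} (hP : ∀ g, π g * P = P) :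
    ((Fintype.card G : k)⁻¹ • ∑ g, π g) * P = P := by
  rw [smul_mul_assoc, Finset.sum_mul]
  simp only [hP, Finset.sum_const, Finset.card_univ, ← Nat.cast_smul_eq_nsmul k, smul_smul]
  rw [inv_mul_cancel₀ (by exact_mod_cast Fintype.card_ne_zero), one_smul]

end GroupAverage

lemma eq_of_isIdempotentElem_of_eq_smul {k A : Type*} [Field k] [Ring A] [Algebra k A]
    [NoZeroSMulDivisors k A] {P S : A} {c : k} (hP : IsIdempotentElem P) (hP0 : P ≠ 0)
    (hSP : S * P = P) (hPS : P = c • S) : P = S := by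
  have hcP : c • P = (1 : k) • P := by
    rw [one_smul, ← hSP, ← smul_mul_assoc, ← hPS, hSP, hP.eq]
  have hc : c = 1 := smul_left_injective k hP0 hcP
  rw [hPS, hc, one_smul]

instance : IsProbabilityMeasure (haarU q) := by
  constructor
  simpa [haarU] using Measure.haarMeasure_self
    (K₀ := (⊤ : TopologicalSpace.PositiveCompacts (Matrix.unitaryGroup (Fin q) ℂ)))

instance : (haarU q).IsMulLeftInvariant := by
  unfold haarU
  infer_instance

instance : (haarU q).IsOpenPosMeasure := by
  unfold haarU
  infer_instance

lemma integrable_kronPow_apply (t : ℕ) (i j : Fin t → Fin q × Fin q) :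
    Integrable (fun U : unitaryGroup (Fin q) ℂ => kronPow q t U i j) (haarU q) :=
  have hcont : Continuous fun U : unitaryGroup (Fin q) ℂ => kronPow q t U i j :=
    ((continuous_kronPow q t).comp continuous_subtype_val).matrix_elem i j
  hcont.integrable_of_hasCompactSupport (HasCompactSupport.of_compactSpace _)

lemma matrixIntegral_kronPow_ne_zero (t : ℕ) (a : Fin t → Fin q) :
    matrixIntegral (haarU q) (fun U : unitaryGroup (Fin q) ℂ => kronPow q t U) ≠ 0 := by
  intro h
  have hentry := congr_fun₂ h (fun k => (a k, a k)) (fun k => (a k, a k))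
  simp only [matrixIntegral, of_apply, kronPow_apply_diag, integral_complex_ofReal,
    Matrix.zero_apply, Complex.ofReal_eq_zero] at hentry
  have hcont : Continuous fun U : unitaryGroup (Fin q) ℂ =>
      ∏ k, Complex.normSq ((U : Matrix (Fin q) (Fin q) ℂ) (a k) (a k)) :=
    continuous_finsetProd _ fun k _ =>
      Complex.continuous_normSq.comp (continuous_subtype_val.matrix_elem _ _)
  refine (integral_pos_of_integrable_nonneg_nonzero (x := 1) hcont
    (hcont.integrable_of_hasCompactSupport (HasCompactSupport.of_compactSpace _))
    (fun U => Finset.prod_nonneg fun _ _ => Complex.normSq_nonneg _) ?_).ne' hentry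
  simp

theorem twisted_tGroup_is_tGroup (t : ℕ)
    (G : Subgroup (Matrix.unitaryGroup (Fin q) ℂ)) [Fintype G]
    (lam : G → ℂ)
    (htwisted : (Fintype.card G : ℂ)⁻¹ •
        ∑ g : G, ((‖lam g‖ : ℂ) ^ 2) •
          kronPow q t ((g : Matrix.unitaryGroup (Fin q) ℂ) : Matrix (Fin q) (Fin q) ℂ)
      = Matrix.of fun i j =>
          ∫ U : Matrix.unitaryGroup (Fin q) ℂ,
            kronPow q t ((U : Matrix (Fin q) (Fin q) ℂ)) i j ∂(haarU q)) :
    (Fintype.card G : ℂ)⁻¹ •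
        ∑ g : G, kronPow q t ((g : Matrix.unitaryGroup (Fin q) ℂ) : Matrix (Fin q) (Fin q) ℂ)
      = Matrix.of fun i j =>
          ∫ U : Matrix.unitaryGroup (Fin q) ℂ,
            kronPow q t ((U : Matrix (Fin q) (Fin q) ℂ)) i j ∂(haarU q) := by
  rcases isEmpty_or_nonempty (Fin t → Fin q × Fin q) with _ | ⟨⟨e⟩⟩
  · exact Subsingleton.elim _ _
  set π := (kronPowHom q t).comp (unitaryGroup (Fin q) ℂ).subtype
  set P := matrixIntegral (haarU q) π
  set S := (Fintype.card G : ℂ)⁻¹ • ∑ g, π.comp G.subtype g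
  have hπ : ∀ i j, Integrable (fun U => π U i j) (haarU q) := integrable_kronPow_apply q t
  have hSP : S * P = P :=
    average_mul_of_forall_mul_eq (π.comp G.subtype) fun g => mul_matrixIntegral_left hπ g
  have hPS : P = ((Fintype.card G : ℂ)⁻¹ * ∑ g : G, (‖lam g‖ : ℂ) ^ 2) • S := by
    rw [← average_mul_weightedAverage]
    exact hSP.symm.trans (congrArg _ htwisted.symm)
  exact (eq_of_isIdempotentElem_of_eq_smul (isIdempotentElem_matrixIntegral hπ)
    (matrixIntegral_kronPow_ne_zero q t (Prod.fst ∘ e)) hSP hPS).symm
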